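/- arXiv:2203.07968 — 2 statements merged into one kernel-verified Lean document; each statement's English description precedes it below -/
import Mathlib

section
/- Every pre-dual cone admits a self-dual modification: if K is a positive cone in a finite-dimensional real inner product space with K* ⊆ K, then there exists a positive cone K̃ with K* ⊆ K̃ = K̃* ⊆ K. -/
open scoped RealInnerProductSpace

variable {V : Type*} [NormedAddCommGroup V] [InnerProductSpace ℝ V] [FiniteDimensional ℝ V]

/-- The dual cone of a set with respect to the real inner product. -/
def dualCone (K : Set V) : Set V := {x | ∀ y ∈ K, 0 ≤ ⟪x, y⟫}

/-- A positive cone: closed, convex, with nonempty interior, closed under nonnegative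
scalar multiplication and addition, and pointed. -/
def IsPositiveCone (K : Set V) : Prop :=
  IsClosed K ∧ Convex ℝ K ∧ (interior K).Nonempty ∧
  (∀ x ∈ K, ∀ c : ℝ, 0 ≤ c → c • x ∈ K) ∧
  (∀ x ∈ K, ∀ y ∈ K, x + y ∈ K) ∧
  K ∩ (-K) = {0}

/-- The dual cone is antitone. -/
lemma dualCone_anti {A B : Set V} (h : A ⊆ B) : dualCone B ⊆ dualCone A :=
  fun _ hx y hy => hx y (h hy)

/-- Closure of a set contained in its dual is still contained in its dual. -/
lemma closure_subset_dualCone_closure {U : Set V} (h : U ⊆ dualCone U) :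
    closure U ⊆ dualCone (closure U) := by
  have step1 : ∀ y ∈ U, closure U ⊆ {x : V | 0 ≤ ⟪x, y⟫} := by
    intro y hy
    refine closure_minimal (fun u hu => h hu y hy)
      (isClosed_le continuous_const (continuous_id.inner continuous_const))
  intro x hx y hy
  have : closure U ⊆ {y : V | 0 ≤ ⟪x, y⟫} := by
    refine closure_minimal (fun u hu => step1 u hu hx)
      (isClosed_le continuous_const (continuous_const.inner continuous_id))
  exact this hy

/-- Closure preserves closedness under nonnegative scalar multiplication. -/
lemma closure_smul_mem {U : Set V} (h : ∀ x ∈ U, ∀ c : ℝ, 0 ≤ c → c • x ∈ U) :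
    ∀ x ∈ closure U, ∀ c : ℝ, 0 ≤ c → c • x ∈ closure U := by
  intro x hx c hc
  exact map_mem_closure (continuous_const_smul c) hx (fun u hu => h u hu c hc)

theorem exists_selfDual_modification (K : Set V) (hK : IsPositiveCone K)
    (hpre : dualCone K ⊆ K) :
    ∃ L : Set V, IsPositiveCone L ∧ dualCone L = L ∧ dualCone K ⊆ L ∧ L ⊆ K := by
  classical
  obtain ⟨hKcl, hKcv, hKint, hKsmul, hKadd, hKpt⟩ := hK
  -- The family of intermediate cones
  set S : Set (Set V) :=
    {L | dualCone K ⊆ L ∧ IsClosed L ∧ Convex ℝ L ∧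
      (∀ x ∈ L, ∀ c : ℝ, 0 ≤ c → c • x ∈ L) ∧ L ⊆ dualCone L} with hS
  have hK0 : (0 : V) ∈ dualCone K := by
    intro y _; simp
  -- dualCone K belongs to S
  have hdualS : dualCone K ∈ S := by
    refine ⟨subset_rfl, ?_, ?_, ?_, ?_⟩
    · have : dualCone K = ⋂ y ∈ K, {x : V | 0 ≤ ⟪x, y⟫} := by
        ext x; simp [dualCone]
      rw [this]
      exact isClosed_biInter fun y _ =>
        isClosed_le continuous_const (continuous_id.inner continuous_const)
    · intro x hx y hy a b ha hb hab z hz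
      have hxz := hx z hz
      have hyz := hy z hz
      simp only [inner_add_left, real_inner_smul_left]
      positivity
    · intro x hx c hc y hy
      rw [real_inner_smul_left]
      exact mul_nonneg hc (hx y hy)
    · intro x hx y hy
      exact hx y (hpre hy)
  -- chains have upper bounds
  have hub : ∀ c ⊆ S, IsChain (· ⊆ ·) c → c.Nonempty →
      ∃ ub ∈ S, ∀ s ∈ c, s ⊆ ub := by
    intro c hcS hchain hcne
    refine ⟨closure (⋃₀ c), ?_, fun s hs => subset_trans (Set.subset_sUnion_of_mem hs)
      subset_closure⟩
    obtain ⟨s0, hs0⟩ := hcne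
    have hU : ∀ x ∈ ⋃₀ c, ∀ c' : ℝ, 0 ≤ c' → c' • x ∈ ⋃₀ c := by
      rintro x ⟨s, hs, hxs⟩ c' hc'
      exact ⟨s, hs, (hcS hs).2.2.2.1 x hxs c' hc'⟩
    have hUdual : ⋃₀ c ⊆ dualCone (⋃₀ c) := by
      rintro x ⟨s, hs, hxs⟩ y ⟨t, ht, hyt⟩
      rcases hchain.total hs ht with hst | hts
      · exact (hcS ht).2.2.2.2 (hst hxs) y hyt
      · exact (hcS hs).2.2.2.2 hxs y (hts hyt)
    have hUcv : Convex ℝ (⋃₀ c) := by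
      rintro x ⟨s, hs, hxs⟩ y ⟨t, ht, hyt⟩ a b ha hb hab
      rcases hchain.total hs ht with hst | hts
      · exact ⟨t, ht, (hcS ht).2.2.1 (hst hxs) hyt ha hb hab⟩
      · exact ⟨s, hs, (hcS hs).2.2.1 hxs (hts hyt) ha hb hab⟩
    refine ⟨subset_trans ((hcS hs0).1) (subset_trans (Set.subset_sUnion_of_mem hs0)
        subset_closure), isClosed_closure, hUcv.closure, closure_smul_mem hU,
        closure_subset_dualCone_closure hUdual⟩
  obtain ⟨M, hsubM, hMmax⟩ := zorn_subset_nonempty S hub (dualCone K) hdualS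
  -- basic properties of M
  obtain ⟨⟨hMd, hMcl, hMcv, hMsmul, hMsd⟩, hMmax'⟩ := hMmax
  have hM0 : (0 : V) ∈ M := hsubM hK0
  -- Maximality forces M to contain its dual cone
  have hdualM : dualCone M ⊆ M := by
    intro x hx
    set P : Set V := {z | ∃ m ∈ M, ∃ t : ℝ, 0 ≤ t ∧ z = m + t • x} with hP
    have hMP : M ⊆ P := fun m hm => ⟨m, hm, 0, le_refl 0, by simp⟩
    have hPsmul : ∀ z ∈ P, ∀ c : ℝ, 0 ≤ c → c • z ∈ P := by
      rintro z ⟨m, hm, t, ht, rfl⟩ c hc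
      exact ⟨c • m, hMsmul m hm c hc, c * t, mul_nonneg hc ht, by
        rw [smul_add, smul_smul]⟩
    have hPcv : Convex ℝ P := by
      rintro z ⟨m, hm, t, ht, rfl⟩ w ⟨n, hn, s, hs, rfl⟩ a b ha hb hab
      refine ⟨a • m + b • n, hMcv hm hn ha hb hab, a * t + b * s,
        by positivity, ?_⟩
      simp only [smul_add, smul_smul, add_smul]
      abel
    have hPdual : P ⊆ dualCone P := by
      rintro z ⟨m, hm, t, ht, rfl⟩ w ⟨n, hn, s, hs, rfl⟩
      have h1 : 0 ≤ ⟪m, n⟫ := hMsd hm n hn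
      have h2 : 0 ≤ ⟪x, n⟫ := hx n hn
      have h3 : 0 ≤ ⟪m, x⟫ := by rw [real_inner_comm]; exact hx m hm
      have h4 : 0 ≤ ⟪x, x⟫ := real_inner_self_nonneg
      simp only [inner_add_left, inner_add_right, real_inner_smul_left,
        real_inner_smul_right]
      positivity
    have hNS : closure P ∈ S := by
      refine ⟨subset_trans hMd (subset_trans hMP subset_closure), isClosed_closure,
        hPcv.closure, closure_smul_mem hPsmul, closure_subset_dualCone_closure hPdual⟩
    have hMN : M ⊆ closure P := subset_trans hMP subset_closure
    have : closure P ⊆ M := hMmax' hNS hMN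
    exact this (subset_closure ⟨0, hM0, 1, zero_le_one, by simp⟩)
  have hMeq : dualCone M = M := Set.Subset.antisymm hdualM hMsd
  -- M is pointed
  have hMpt : M ∩ (-M) = {0} := by
    ext z
    simp only [Set.mem_inter_iff, Set.mem_neg, Set.mem_singleton_iff]
    constructor
    · rintro ⟨hz, hz'⟩
      have h1 : 0 ≤ ⟪-z, z⟫ := hMsd hz' z hz
      rw [inner_neg_left, neg_nonneg] at h1
      have := real_inner_self_nonneg (x := z)
      have : ⟪z, z⟫ = 0 := le_antisymm h1 this
      exact inner_self_eq_zero.mp this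
    · rintro rfl
      exact ⟨hM0, by simpa using hM0⟩
  -- M ⊆ K via double duality
  have hMK : M ⊆ K := by
    have h1 : dualCone M ⊆ dualCone (dualCone K) := dualCone_anti hMd
    have h2 : dualCone (dualCone K) ⊆ K := by
      -- use Mathlib's double dual theorem for the cone K
      intro z hz
      by_contra hzK
      let Kc : ProperCone ℝ V :=
        { carrier := K
          add_mem' := fun hx hy => hKadd _ hx _ hy
          zero_mem' := by
            have : (0:V) ∈ K ∩ -K := by rw [hKpt]; rfl
            exact this.1
          smul_mem' := fun c x hx => hKsmul x hx c.1 c.2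
          isClosed' := hKcl }
      obtain ⟨y, hy, hzy⟩ := Kc.hyperplane_separation' (x₀ := z) hzK
      have := hz y (fun w hw => by rw [real_inner_comm]; exact hy w hw)
      linarith
    exact fun z hz => h2 (h1 (by rw [hMeq]; exact hz))
  -- M has nonempty interior
  have hMspan : Submodule.span ℝ M = ⊤ := by
    by_contra hne
    rw [← Submodule.orthogonal_eq_bot_iff] at hne
    obtain ⟨v, hv, hv0⟩ := Submodule.exists_mem_ne_zero_of_ne_bot hne
    have hvM : v ∈ dualCone M := fun y hy => by
      have := (Submodule.mem_orthogonal _ v).mp hv y (Submodule.subset_span hy)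
      rw [real_inner_comm] at this
      rw [this]
    have hvM' : -v ∈ dualCone M := fun y hy => by
      have := (Submodule.mem_orthogonal _ v).mp hv y (Submodule.subset_span hy)
      rw [real_inner_comm] at this
      rw [inner_neg_left, this, neg_zero]
    have : v ∈ M ∩ (-M) := ⟨hdualM hvM, by simpa using hdualM hvM'⟩
    rw [hMpt] at this
    exact hv0 this
  have hMint : (interior M).Nonempty := by
    rw [hMcv.interior_nonempty_iff_affineSpan_eq_top]
    have hne : (affineSpan ℝ M : Set V).Nonempty := ⟨0, subset_affineSpan ℝ M hM0⟩
    rw [← AffineSubspace.direction_eq_top_iff_of_nonempty hne, direction_affineSpan]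
    rw [eq_top_iff, ← hMspan]
    apply Submodule.span_le.mpr
    intro m hm
    have : m - 0 ∈ M -ᵥ M := Set.vsub_mem_vsub hm hM0
    simpa [vectorSpan_def] using Submodule.subset_span (R := ℝ) (s := (M -ᵥ M : Set V)) this
  have hMadd : ∀ x ∈ M, ∀ y ∈ M, x + y ∈ M := by
    intro x hx y hy
    have h := hMcv hx hy (by norm_num : (0:ℝ) ≤ 1/2) (by norm_num : (0:ℝ) ≤ 1/2) (by norm_num)
    have := hMsmul _ h 2 (by norm_num)
    rw [smul_add, smul_smul, smul_smul] at this
    norm_num at this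
    exact this
  exact ⟨M, ⟨hMcl, hMcv, hMint, hMsmul, hMadd, hMpt⟩, hMeq, hMd, hMK⟩
end

section
/- Let K be a pre-dual cone (K* ⊆ K) and let K̃ be a pre-dual cone with K* ⊆ K̃ ⊆ K that is maximal (with respect to the order (K_X, K_X*) ⪯ (K_Y, K_Y*) iff K_X ⊇ K_Y) among pre-dual cones contained in K. Then K̃ is self-dual: K̃ = K̃*. -/
open scoped RealInnerProductSpace

variable {V : Type*} [NormedAddCommGroup V] [InnerProductSpace ℝ V] [FiniteDimensional ℝ V]

/-- `dualCone` agrees with Mathlib's `Set.innerDualCone`. -/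
lemma dualCone_eq_innerDualCone (K : Set V) :
    dualCone K = ((haveI := FiniteDimensional.complete ℝ V; ProperCone.innerDual K) : Set V) := by
  ext z
  simp only [dualCone, Set.mem_setOf_eq, SetLike.mem_coe, ProperCone.mem_innerDual]
  constructor
  · intro h y hy; rw [real_inner_comm]; exact h y hy
  · intro h y hy; rw [real_inner_comm]; exact h hy

/-- Bipolar: for a closed positive cone `L`, `(L*)* ⊆ L`. -/
lemma bipolar_subset (L : Set V) (hL : IsPositiveCone L) :
    dualCone (dualCone L) ⊆ L := by
  obtain ⟨hclosed, _hconv, hint, hsmul, hadd, _hpt⟩ := hL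
  obtain ⟨e, he⟩ := hint
  have heL : e ∈ L := interior_subset he
  have h0 : (0 : V) ∈ L := by simpa using hsmul e heL 0 le_rfl
  haveI := FiniteDimensional.complete ℝ V
  set C : ProperCone ℝ V :=
    { carrier := L
      zero_mem' := h0
      smul_mem' := fun c {x} hx => hsmul x hx c c.2
      add_mem' := fun {x} {y} hx hy => hadd x hx y hy
      isClosed' := hclosed } with hC
  have hCb := ProperCone.innerDual_innerDual C
  intro z hz
  have hmem : z ∈ ((ProperCone.innerDual (ProperCone.innerDual (C : Set V) : Set V)) : Set V) := by
    rw [← dualCone_eq_innerDualCone]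
    intro y hy
    refine hz y ?_
    rw [dualCone_eq_innerDualCone]
    exact hy
  rw [hCb] at hmem
  exact hmem

theorem maximal_predual_isSelfDual (K L : Set V)
    (hK : IsPositiveCone K) (hKpre : dualCone K ⊆ K)
    (hL : IsPositiveCone L) (hLpre : dualCone L ⊆ L)
    (hLK : L ⊆ K) (hKL : dualCone K ⊆ L)
    (hmax : ∀ M : Set V, IsPositiveCone M → dualCone M ⊆ M → M ⊆ K → M ⊆ L → M = L) :
    dualCone L = L := by
  apply Set.Subset.antisymm hLpre
  intro x hx
  obtain ⟨hclosed, hconv, hint, hsmul, hadd, hpt⟩ := hL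
  by_cases hx0 : x = 0
  · intro y _; simp [hx0]
  -- The auxiliary cone M = L ∩ {y | 0 ≤ ⟪x, y⟫}
  set H : Set V := {y | 0 ≤ ⟪x, y⟫} with hHdef
  set M : Set V := L ∩ H with hMdef
  have hML : M ⊆ L := Set.inter_subset_left
  have hMK : M ⊆ K := hML.trans hLK
  have hxH : x ∈ H := by simpa [hHdef] using real_inner_self_nonneg (x := x)
  have hxM : x ∈ M := ⟨hx, hxH⟩
  -- H is closed
  have hHclosed : IsClosed H :=
    isClosed_le continuous_const (continuous_const.inner continuous_id)
  -- M is closed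
  have hMclosed : IsClosed M := hclosed.inter hHclosed
  -- M is convex
  have hMconv : Convex ℝ M := by
    refine hconv.inter ?_
    intro a ha b hb s t hs ht _
    simp only [hHdef, Set.mem_setOf_eq, inner_add_right, inner_smul_right] at *
    exact add_nonneg (mul_nonneg hs ha) (mul_nonneg ht hb)
  -- interior of M is nonempty
  have hMint : (interior M).Nonempty := by
    obtain ⟨e₀, he₀⟩ := hint
    have he₀L : e₀ ∈ L := interior_subset he₀
    have hxne : x ≠ 0 := hx0
    have hxn : (0:ℝ) < ‖x‖ ^ 2 := pow_pos (norm_pos_iff.mpr hxne) 2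
    set t : ℝ := (|⟪x, e₀⟫| + 1) / ‖x‖ ^ 2 with ht
    have htpos : 0 ≤ t := by positivity
    set e : V := e₀ + t • x with hedef
    -- e is in the interior of L
    have heintL : e ∈ interior L := by
      obtain ⟨U, hUL, hUopen, he₀U⟩ := mem_interior.mp he₀
      refine mem_interior.mpr ⟨(fun z => z + t • x) '' U, ?_, ?_, ?_⟩
      · rintro _ ⟨u, hu, rfl⟩
        exact hadd u (hUL hu) _ (hsmul x hx t htpos)
      · exact (Homeomorph.addRight (t • x)).isOpenMap U hUopen
      · exact ⟨e₀, he₀U, rfl⟩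
    have hestrict : 0 < ⟪x, e⟫ := by
      have : ⟪x, e⟫ = ⟪x, e₀⟫ + t * ‖x‖ ^ 2 := by
        rw [hedef, inner_add_right, inner_smul_right, real_inner_self_eq_norm_sq]
      rw [this, ht, div_mul_cancel₀ _ (ne_of_gt hxn)]
      have := neg_abs_le ⟪x, e₀⟫
      linarith
    refine ⟨e, mem_interior.mpr ⟨interior L ∩ {y | 0 < ⟪x, y⟫}, ?_, ?_, heintL, hestrict⟩⟩
    · rintro z ⟨hz1, hz2⟩
      refine ⟨interior_subset hz1, ?_⟩
      simp only [hHdef, Set.mem_setOf_eq]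
      exact le_of_lt hz2
    · exact isOpen_interior.inter (isOpen_lt continuous_const (continuous_const.inner continuous_id))
  -- M is closed under nonnegative scaling
  have hMsmul : ∀ y ∈ M, ∀ c : ℝ, 0 ≤ c → c • y ∈ M := by
    rintro y ⟨hyL, hyH⟩ c hc
    refine ⟨hsmul y hyL c hc, ?_⟩
    simp only [hHdef, Set.mem_setOf_eq, inner_smul_right]
    exact mul_nonneg hc hyH
  -- M is closed under addition
  have hMadd : ∀ y ∈ M, ∀ z ∈ M, y + z ∈ M := by
    rintro y ⟨hyL, hyH⟩ z ⟨hzL, hzH⟩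
    refine ⟨hadd y hyL z hzL, ?_⟩
    simp only [hHdef, Set.mem_setOf_eq, inner_add_right]
    exact add_nonneg hyH hzH
  -- M is pointed
  have hMpt : M ∩ (-M) = {0} := by
    apply Set.Subset.antisymm
    · intro z ⟨hz1, hz2⟩
      have : z ∈ L ∩ (-L) := ⟨hML hz1, hML (by simpa using hz2)⟩
      rw [hpt] at this
      exact this
    · intro z hz
      rw [Set.mem_singleton_iff] at hz
      subst hz
      have h0M : (0:V) ∈ M := by
        have := hMsmul x hxM 0 le_rfl
        simpa using this
      exact ⟨h0M, by simpa using h0M⟩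
  have hMpos : IsPositiveCone M := ⟨hMclosed, hMconv, hMint, hMsmul, hMadd, hMpt⟩
  -- M is pre-dual
  have hLpos : IsPositiveCone L := ⟨hclosed, hconv, hint, hsmul, hadd, hpt⟩
  have hMpre : dualCone M ⊆ M := by
    intro z hz
    constructor
    · -- z ∈ L, via bipolar theorem: dualCone L ⊆ M
      apply bipolar_subset L hLpos
      intro w hw
      have hwM : w ∈ M := ⟨hLpre hw, by simpa [hHdef] using (real_inner_comm x w ▸ hw x hx)⟩
      exact hz w hwM
    · -- z ∈ H
      have := hz x hxM
      simpa [hHdef, real_inner_comm] using this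
  -- maximality forces M = L
  have hMeq : M = L := hmax M hMpos hMpre hMK hML
  -- conclude x ∈ dualCone L
  intro y hy
  have : y ∈ M := hMeq ▸ hy
  exact this.2
end
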